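/- Let H be a numerical semigroup, n ∈ H nonzero, k a field, R' = k[H]/(t^n). Then max Ap(H,n) equals the maximal degree of a nonzero homogeneous element of the socle of R'. -/

import Mathlib

/-!
A monomial `t ^ l` vanishes in `k[H] ⧸ (t ^ n)` exactly when `l - n ∈ H`, i.e. when
`l ∉ Ap(H, n)`, and `t ^ l * t ^ m = t ^ (l + m)`. Hence the socle degrees are the
`l ∈ Ap(H, n)` with `l + m ∉ Ap(H, n)` for every nonzero `m ∈ H`: a subset of `Ap(H, n)` that
contains its maximum.
-/

namespace AddMonoidAlgebra

variable {k A : Type*} [Semiring k] [Nontrivial k] [AddMonoid A]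

theorem single_one_mem_span_single_one_iff {a b : A} :
    single a (1 : k) ∈ Ideal.span {single b 1} ↔ ∃ c, a = c + b := by
  classical
  rw [← of'_apply, ← Set.image_singleton, mem_ideal_span_of'_image]
  simp [coeff_single]

end AddMonoidAlgebra

namespace AddSubmonoid

/-- `Ap(H, n)`; the guard `n ≤ h` keeps truncated subtraction from reading `h < n` as
`h - n = 0 ∈ H`. -/
def apery (H : AddSubmonoid ℕ) (n : ℕ) : Set ℕ := {h | h ∈ H ∧ ¬(n ≤ h ∧ h - n ∈ H)}

theorem exists_add_eq_iff_sub_mem {H : AddSubmonoid ℕ} {l n : ℕ} (hl : l ∈ H) (hn : n ∈ H) :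
    (∃ c : H, (⟨l, hl⟩ : H) = c + ⟨n, hn⟩) ↔ n ≤ l ∧ l - n ∈ H := by
  constructor
  · rintro ⟨c, hc⟩
    have hl : l = c + n := congrArg Subtype.val hc
    exact ⟨by omega, by simp [hl]⟩
  · rintro ⟨hnl, hsub⟩
    exact ⟨⟨l - n, hsub⟩, Subtype.ext (Nat.sub_add_cancel hnl).symm⟩

end AddSubmonoid

open AddMonoidAlgebra AddSubmonoid

section Socle

variable (k : Type*) [CommRing k] {H : AddSubmonoid ℕ} {n : ℕ} (hn : n ∈ H)

/-- The degrees of the nonzero monomials in the socle of `k[H] ⧸ (t ^ n)`. -/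
def socleDegrees : Set ℕ :=
  {l | ∃ hl : l ∈ H,
    Ideal.Quotient.mk (Ideal.span {single (⟨n, hn⟩ : H) (1 : k)})
        (single (⟨l, hl⟩ : H) (1 : k)) ≠ 0 ∧
      ∀ m : H, (m : ℕ) ≠ 0 →
        Ideal.Quotient.mk (Ideal.span {single (⟨n, hn⟩ : H) (1 : k)})
            (single (⟨l, hl⟩ : H) (1 : k)) *
          Ideal.Quotient.mk (Ideal.span {single (⟨n, hn⟩ : H) (1 : k)}) (single m (1 : k)) = 0}

variable [Nontrivial k]

theorem mk_single_eq_zero_iff {l : ℕ} (hl : l ∈ H) :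
    Ideal.Quotient.mk (Ideal.span {single (⟨n, hn⟩ : H) (1 : k)})
        (single (⟨l, hl⟩ : H) (1 : k)) = 0 ↔
      n ≤ l ∧ l - n ∈ H := by
  rw [Ideal.Quotient.eq_zero_iff_mem, single_one_mem_span_single_one_iff,
    exists_add_eq_iff_sub_mem]

theorem mem_socleDegrees_iff {l : ℕ} :
    l ∈ socleDegrees k hn ↔ l ∈ H.apery n ∧ ∀ m ∈ H, m ≠ 0 → l + m ∉ H.apery n := by
  constructor
  · rintro ⟨hl, hne, hsoc⟩
    refine ⟨⟨hl, (mk_single_eq_zero_iff k hn hl).not.1 hne⟩, fun m hm hm0 hap => hap.2 ?_⟩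
    have := hsoc ⟨m, hm⟩ hm0
    rw [← map_mul, single_mul_single, one_mul] at this
    exact (mk_single_eq_zero_iff k hn (H.add_mem hl hm)).1 this
  · rintro ⟨⟨hl, hap⟩, hmax⟩
    refine ⟨hl, (mk_single_eq_zero_iff k hn hl).not.2 hap, fun m hm0 => ?_⟩
    rw [← map_mul, single_mul_single, one_mul]
    exact (mk_single_eq_zero_iff k hn (H.add_mem hl m.2)).2
      (not_not.1 fun h => hmax m m.2 hm0 ⟨H.add_mem hl m.2, h⟩)

end Socle

theorem max_apery_eq_socle_degree_general
    (k : Type*) [Field k]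
    (H : AddSubmonoid ℕ)
    (n : ℕ) (hn : n ∈ H)
    (a d : ℕ)
    (ha : IsGreatest {h : ℕ | h ∈ H ∧ ¬(n ≤ h ∧ h - n ∈ H)} a)
    (hd : IsGreatest {l : ℕ | ∃ hl : l ∈ H,
        Ideal.Quotient.mk (Ideal.span {AddMonoidAlgebra.single (⟨n, hn⟩ : H) (1 : k)})
          (AddMonoidAlgebra.single (⟨l, hl⟩ : H) (1 : k)) ≠ 0 ∧
        ∀ m : H, (m : ℕ) ≠ 0 →
          Ideal.Quotient.mk (Ideal.span {AddMonoidAlgebra.single (⟨n, hn⟩ : H) (1 : k)})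
              (AddMonoidAlgebra.single (⟨l, hl⟩ : H) (1 : k)) *
            Ideal.Quotient.mk (Ideal.span {AddMonoidAlgebra.single (⟨n, hn⟩ : H) (1 : k)})
              (AddMonoidAlgebra.single m (1 : k)) = 0} d) :
    a = d := by
  have hd : IsGreatest (socleDegrees k hn) d := hd
  have socle_subset_apery : socleDegrees k hn ⊆ H.apery n :=
    fun l hl => ((mem_socleDegrees_iff k hn).1 hl).1
  have ha_mem : a ∈ socleDegrees k hn :=
    (mem_socleDegrees_iff k hn).2 ⟨ha.1, fun m _ hm0 ham => by have := ha.2 ham; omega⟩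
  exact le_antisymm (hd.2 ha_mem) (hd.mono ha socle_subset_apery)

/-- max Ap(H,n) equals the maximal degree of a nonzero homogeneous element of
the socle of R' = k[H]/(t^n). -/
theorem max_apery_eq_socle_degree
    (k : Type*) [Field k]
    (H : AddSubmonoid ℕ) (hfin : {m : ℕ | m ∉ H}.Finite)
    (hne : (H : Set ℕ) ≠ Set.univ)
    (n : ℕ) (hn : n ∈ H) (hn0 : n ≠ 0)
    (a d : ℕ)
    (ha : IsGreatest {h : ℕ | h ∈ H ∧ ¬(n ≤ h ∧ h - n ∈ H)} a)
    (hd : IsGreatest {l : ℕ | ∃ hl : l ∈ H,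
        Ideal.Quotient.mk (Ideal.span {AddMonoidAlgebra.single (⟨n, hn⟩ : H) (1 : k)})
          (AddMonoidAlgebra.single (⟨l, hl⟩ : H) (1 : k)) ≠ 0 ∧
        ∀ m : H, (m : ℕ) ≠ 0 →
          Ideal.Quotient.mk (Ideal.span {AddMonoidAlgebra.single (⟨n, hn⟩ : H) (1 : k)})
              (AddMonoidAlgebra.single (⟨l, hl⟩ : H) (1 : k)) *
            Ideal.Quotient.mk (Ideal.span {AddMonoidAlgebra.single (⟨n, hn⟩ : H) (1 : k)})
              (AddMonoidAlgebra.single m (1 : k)) = 0} d) :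
    a = d :=
  max_apery_eq_socle_degree_general k H n hn a d ha hd
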